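/- arXiv:2304.05270 — 6 statements merged into one kernel-verified Lean document; each statement's English description precedes it below -/
import Mathlib

section
/- Let C be an increasing (k-1)-tuple of gap-length constraints (i.e., C[i] ⊆ C[i+1] for all i). Suppose s is a string of length i+1 with an embedding into w[1:i'] satisfying C[1:i] whose last position maps to i', and t is a string of length j+1 with an embedding into w[1:i'] satisfying C[1:j] whose last position maps to i', where j > i. If there exist a symbol a and a position i'' > i' such that the embedding of s extends to an embedding of sa into w[1:i''] satisfying C[1:i+1], then the embedding of t extends to an embedding of ta into w[1:i''] satisfying C[1:j+1]. -/
/-- An embedding of the string `u` into the string `w`: a strictly increasing map on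
positions `0, ..., |u|-1` that is letter-preserving. -/
def IsEmbedding {α : Type*} (u w : List α) (e : ℕ → ℕ) : Prop :=
  StrictMonoOn e (Set.Iio u.length) ∧ ∀ i < u.length, w[e i]? = u[i]?

/-- The gap length `g` lies in the constraint interval `c = (ℓ, u)`. -/
def inCon (g : ℕ) (c : ℕ × ℕ) : Prop := c.1 ≤ g ∧ g ≤ c.2

/-- Containment of constraint intervals: `(a,b) ⊆ (c,d)` iff `c ≤ a` and `b ≤ d`. -/
def ConSub (c d : ℕ × ℕ) : Prop := d.1 ≤ c.1 ∧ c.2 ≤ d.2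

/-- The embedding `e` of a string of length `k` satisfies the tuple `C` of gap-length
constraints (0-indexed: `C i` constrains the gap between positions `i` and `i+1`). -/
def SatGaps (k : ℕ) (C : ℕ → ℕ × ℕ) (e : ℕ → ℕ) : Prop :=
  ∀ i, i + 1 < k → inCon (e (i + 1) - e i - 1) (C i)

/-- `u` is a `C`-subsequence of `w`. -/
def CSubseq {α : Type*} (C : ℕ → ℕ × ℕ) (u w : List α) : Prop :=
  ∃ e : ℕ → ℕ, IsEmbedding u w e ∧ SatGaps u.length C e

/-- A `t`-tuple of gap-length constraints (0-indexed `C 0, ..., C (t-1)`) is increasing. -/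
def Increasing (t : ℕ) (C : ℕ → ℕ × ℕ) : Prop :=
  ∀ i, i + 1 < t → ConSub (C i) (C (i + 1))

lemma conSub_refl (c : ℕ × ℕ) : ConSub c c := ⟨le_refl _, le_refl _⟩

lemma conSub_trans {c d e : ℕ × ℕ} (h1 : ConSub c d) (h2 : ConSub d e) : ConSub c e :=
  ⟨le_trans h2.1 h1.1, le_trans h1.2 h2.2⟩

lemma chain {n : ℕ} {C : ℕ → ℕ × ℕ} (hinc : Increasing n C) :
    ∀ j i, i ≤ j → j < n → ConSub (C i) (C j) := by
  intro j
  induction j with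
  | zero => intro i hi _; interval_cases i; exact conSub_refl _
  | succ m ih =>
    intro i hi hn
    rcases Nat.eq_or_lt_of_le hi with h | h
    · rw [h]; exact conSub_refl _
    · exact conSub_trans (ih i (Nat.lt_succ_iff.mp h) (Nat.lt_of_succ_lt hn))
        (hinc m hn)

theorem stmt1 {α : Type*} (w s t : List α) (k : ℕ) (C : ℕ → ℕ × ℕ)
    (hinc : Increasing (k - 1) C)
    (i j i' i'' : ℕ) (a : α)
    (hs : s.length = i + 1) (ht : t.length = j + 1) (hij : i < j) (hjk : j + 2 ≤ k)
    (es et : ℕ → ℕ)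
    (hes : IsEmbedding s w es) (hgs : SatGaps (i + 1) C es) (hls : es i = i')
    (het : IsEmbedding t w et) (hgt : SatGaps (j + 1) C et) (hlt : et j = i')
    (hii : i' < i'')
    (hextS : IsEmbedding (s ++ [a]) w (Function.update es (i + 1) i'') ∧
             SatGaps (i + 2) C (Function.update es (i + 1) i'')) :
    IsEmbedding (t ++ [a]) w (Function.update et (j + 1) i'') ∧
      SatGaps (j + 2) C (Function.update et (j + 1) i'') := by
  have hlen : (t ++ [a]).length = j + 2 := by simp [ht]
  have hlens : (s ++ [a]).length = i + 2 := by simp [hs]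
  -- w at i'' is a
  have hwa : w[i'']? = some a := by
    have := hextS.1.2 (i + 1) (by rw [hlens]; omega)
    rw [Function.update_self] at this
    rw [this, List.getElem?_append_right (by omega)]
    simp [hs]
  -- gap satisfies C i
  have hgapi : inCon (i'' - i' - 1) (C i) := by
    have := hextS.2 i (by omega)
    rwa [Function.update_self, Function.update_of_ne (by omega), hls] at this
  have hCij : ConSub (C i) (C j) := chain hinc j i (le_of_lt hij) (by omega)
  have hgapj : inCon (i'' - i' - 1) (C j) :=
    ⟨le_trans hCij.1 hgapi.1, le_trans hgapi.2 hCij.2⟩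
  -- et values below j+1 are at most i'
  have hetle : ∀ x, x ≤ j → et x ≤ i' := by
    intro x hx
    rcases Nat.eq_or_lt_of_le hx with h | h
    · rw [h, hlt]
    · exact le_of_lt (hlt ▸ het.1 (by rw [ht]; exact Set.mem_Iio.mpr (by omega))
        (by rw [ht]; exact Set.mem_Iio.mpr (by omega)) h)
  refine ⟨⟨?_, ?_⟩, ?_⟩
  · -- strict mono
    intro x hx y hy hxy
    rw [hlen] at hx hy
    simp only [Set.mem_Iio] at hx hy
    rcases Nat.lt_or_ge y (j + 1) with hy' | hy'
    · rw [Function.update_of_ne (by omega), Function.update_of_ne (by omega)]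
      exact het.1 (by rw [ht]; exact Set.mem_Iio.mpr (by omega))
        (by rw [ht]; exact Set.mem_Iio.mpr hy') hxy
    · have : y = j + 1 := by omega
      subst this
      rw [Function.update_self, Function.update_of_ne (by omega)]
      exact lt_of_le_of_lt (hetle x (by omega)) hii
  · -- letters
    intro m hm
    rw [hlen] at hm
    rcases Nat.lt_or_ge m (j + 1) with hm' | hm'
    · rw [Function.update_of_ne (by omega),
        List.getElem?_append_left (by omega)]
      exact het.2 m (by omega)
    · have : m = j + 1 := by omega
      subst this
      rw [Function.update_self, List.getElem?_append_right (by omega)]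
      simpa [ht] using hwa
  · -- gaps
    intro m hm
    rcases Nat.lt_or_ge m j with hm' | hm'
    · rw [Function.update_of_ne (by omega), Function.update_of_ne (by omega)]
      exact hgt m (by omega)
    · have : m = j := by omega
      subst this
      rwa [Function.update_self, Function.update_of_ne (by omega), hlt]
end

section
/- Let C be a synchronized (k-1)-tuple of gap-length constraints: for all i ≤ j in [k-1], if C[i] = C[j] then C[i+e] ⊆ C[j+e] for all e ≥ 0 with j+e ≤ k-1. Suppose s is a string with an embedding into w[1:i'] satisfying C[1:i] whose last position maps to i', and t is a string with an embedding into w[1:i'] satisfying C[1:j] whose last position maps to i', where j > i and C[i+1] = C[j+1]. If there exist a symbol a and a position i'' > i' such that the embedding of s extends to an embedding of sa into w[1:i''] satisfying C[1:i+1], then the embedding of t extends to an embedding of ta into w[1:i''] satisfying C[1:j+1]. -/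
/-- A `t`-tuple of gap-length constraints (0-indexed) is synchronized. -/
def Synchronized (t : ℕ) (C : ℕ → ℕ × ℕ) : Prop :=
  ∀ p q, p ≤ q → q < t → C p = C q → ∀ e, q + e < t → ConSub (C (p + e)) (C (q + e))

theorem stmt2 {α : Type*} (w s t : List α) (k : ℕ) (C : ℕ → ℕ × ℕ)
    (hsync : Synchronized (k - 1) C)
    (i j i' i'' : ℕ) (a : α)
    (hs : s.length = i + 1) (ht : t.length = j + 1) (hij : i < j) (hjk : j + 2 ≤ k)
    (hCij : C i = C j)
    (es et : ℕ → ℕ)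
    (hes : IsEmbedding s w es) (hgs : SatGaps (i + 1) C es) (hls : es i = i')
    (het : IsEmbedding t w et) (hgt : SatGaps (j + 1) C et) (hlt : et j = i')
    (hii : i' < i'')
    (hextS : IsEmbedding (s ++ [a]) w (Function.update es (i + 1) i'') ∧
             SatGaps (i + 2) C (Function.update es (i + 1) i'')) :
    IsEmbedding (t ++ [a]) w (Function.update et (j + 1) i'') ∧
      SatGaps (j + 2) C (Function.update et (j + 1) i'') := by
  obtain ⟨⟨hmonoS, hletS⟩, hgapS⟩ := hextS
  obtain ⟨hmonoT, hletT⟩ := het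
  have hwa : w[i'']? = some a := by
    have := hletS (i + 1) (by simp [hs])
    rw [Function.update_self, List.getElem?_append_right (by omega), hs] at this
    simpa using this
  refine ⟨⟨?_, ?_⟩, ?_⟩
  · intro x hx y hy hxy
    simp only [Set.mem_Iio, List.length_append, List.length_singleton, ht] at hx hy
    rcases Nat.lt_or_ge y (j + 1) with hy' | hy'
    · rw [Function.update_of_ne (by omega), Function.update_of_ne (by omega)]
      exact hmonoT (by simp [ht]; omega) (by simp [ht]; omega) hxy
    · have hy2 : y = j + 1 := by omega
      rw [hy2, Function.update_self, Function.update_of_ne (by omega)]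
      rcases Nat.lt_or_ge x j with hx' | hx'
      · have := hmonoT (by simp [ht]; omega) (by simp [ht]) hx'
        omega
      · have hxj : x = j := by omega
        rw [hxj, hlt]; exact hii
  · intro m hm
    simp only [List.length_append, List.length_singleton, ht] at hm
    rcases Nat.lt_or_ge m (j + 1) with hm' | hm'
    · rw [Function.update_of_ne (by omega), List.getElem?_append_left (by omega)]
      exact hletT m (by omega)
    · have hm2 : m = j + 1 := by omega
      rw [hm2, Function.update_self, List.getElem?_append_right (by omega), ht]
      simpa using hwa
  · intro m hm
    rcases Nat.lt_or_ge m j with hm' | hm'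
    · rw [Function.update_of_ne (by omega), Function.update_of_ne (by omega)]
      exact hgt m (by omega)
    · have hm2 : m = j := by omega
      subst hm2
      rw [Function.update_self, Function.update_of_ne (by omega), hlt]
      have := hgapS i (by omega)
      rw [Function.update_self, Function.update_of_ne (by omega), hls] at this
      rwa [hCij] at this
end

section
/- Let v, w be strings with a single repeated gap constraint (ℓ,u), and define M[i,j] as the largest p such that some string of length p has matching embeddings into v[1:i] and w[1:j] both satisfying the constraint tuple ((ℓ,u),...,(ℓ,u)) (with M[i,j] = 0 if no such string exists). Then M[i,j] = p > 0 if and only if v[i] = w[j] and p - 1 is the largest value for which there exist i' with i-u-1 ≤ i' ≤ i-ℓ-1 and j' with j-u-1 ≤ j' ≤ j-ℓ-1 such that M[i',j'] = p-1 (interpreting p = 1 as the case where no valid predecessor exists or the maximum over the range is 0). -/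
def MatchAt {α : Type*} (C : ℕ → ℕ × ℕ) (s x : List α) (i : ℕ) : Prop :=
  ∃ e : ℕ → ℕ, IsEmbedding s x e ∧ SatGaps s.length C e ∧ e (s.length - 1) = i

def Mmat {α : Type*} (C : ℕ → ℕ × ℕ) (v w : List α) (p i j : ℕ) : Prop :=
  ∃ s : List α, s.length = p ∧ MatchAt C s v i ∧ MatchAt C s w j

lemma mmat_head_eq {α : Type*} {C : ℕ → ℕ × ℕ} {v w : List α} {p i j : ℕ}
    (h : Mmat C v w p i j) (hp : 0 < p) (hi : i < v.length) (hj : j < w.length) :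
    v[i] = w[j] := by
  obtain ⟨s, hs, ⟨e, ⟨_, he⟩, _, hel⟩, ⟨f, ⟨_, hf⟩, _, hfl⟩⟩ := h
  have h1 := he (s.length - 1) (by omega)
  have h2 := hf (s.length - 1) (by omega)
  rw [hel, List.getElem?_eq_getElem hi] at h1
  rw [hfl, List.getElem?_eq_getElem hj] at h2
  have := h1.trans h2.symm
  exact Option.some.inj this

lemma matchAt_one {α : Type*} {x : List α} {i : ℕ} (a : α) (hx : x[i]? = some a)
    (C : ℕ → ℕ × ℕ) : MatchAt C [a] x i := by
  refine ⟨fun _ => i, ⟨?_, ?_⟩, ?_, rfl⟩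
  · intro p hp q hq hpq
    simp only [Set.mem_Iio, List.length_singleton] at hp hq
    omega
  · intro k hk
    simp only [List.length_singleton] at hk
    interval_cases k
    simpa using hx
  · intro k hk
    simp at hk

lemma mmat_one {α : Type*} {v w : List α} {i j : ℕ} (hi : i < v.length) (hj : j < w.length)
    (h : v[i] = w[j]) (C : ℕ → ℕ × ℕ) : Mmat C v w 1 i j := by
  refine ⟨[v[i]], rfl, matchAt_one _ (List.getElem?_eq_getElem hi) C,
    matchAt_one _ ?_ C⟩
  rw [h]; exact List.getElem?_eq_getElem hj

lemma matchAt_extend {α : Type*} {ℓ u : ℕ} {s x : List α} {i' i : ℕ} (a : α)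
    (hx : x[i]? = some a)
    (h : MatchAt (fun _ => (ℓ, u)) s x i') (hs : 0 < s.length)
    (h1 : i' + ℓ + 1 ≤ i) (h2 : i ≤ i' + u + 1) :
    MatchAt (fun _ => (ℓ, u)) (s ++ [a]) x i := by
  obtain ⟨e, ⟨hmono, hlet⟩, hgap, hlast⟩ := h
  have hub : ∀ k < s.length, e k ≤ i' := by
    intro k hk
    rcases eq_or_lt_of_le (Nat.le_sub_one_of_lt hk) with hk' | hk'
    · rw [← hlast, hk']
    · rw [← hlast]
      exact le_of_lt (hmono (Set.mem_Iio.2 hk) (Set.mem_Iio.2 (by omega)) hk')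
  refine ⟨fun k => if k < s.length then e k else i, ⟨?_, ?_⟩, ?_, ?_⟩
  · intro p hp q hq hpq
    simp only [Set.mem_Iio, List.length_append, List.length_singleton] at hp hq
    by_cases hq' : q < s.length
    · have hp' : p < s.length := by omega
      simp only [hp', hq', if_true]
      exact hmono (Set.mem_Iio.2 hp') (Set.mem_Iio.2 hq') hpq
    · have hq2 : q = s.length := by omega
      have hp' : p < s.length := by omega
      simp only [hp', if_true, hq', if_false]
      have := hub p hp'
      omega
  · intro k hk
    simp only [List.length_append, List.length_singleton] at hk
    by_cases hk' : k < s.length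
    · simp only [hk', if_true]
      rw [List.getElem?_append]
      simp only [hk', if_true]
      exact hlet k hk'
    · have hk2 : k = s.length := by omega
      subst hk2
      simp only [lt_irrefl, if_false]
      simpa using hx
  · intro k hk
    simp only [List.length_append, List.length_singleton] at hk
    by_cases hk' : k + 1 < s.length
    · have hk'' : k < s.length := by omega
      simp only [hk', hk'', if_true]
      exact hgap k hk'
    · have hk2 : k + 1 = s.length := by omega
      have hk'' : k < s.length := by omega
      simp only [hk', if_false, hk'', if_true]
      have hek : e k = i' := by rw [← hlast]; congr 1; omega
      rw [hek]
      exact ⟨by omega, by omega⟩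
  · have : (s ++ [a]).length - 1 = s.length := by simp
    rw [this]
    simp

lemma mmat_extend {α : Type*} {ℓ u : ℕ} {v w : List α} {q i' j' i j : ℕ}
    (hi : i < v.length) (hj : j < w.length) (hvw : v[i] = w[j])
    (h : Mmat (fun _ => (ℓ, u)) v w q i' j') (hq : 0 < q)
    (h1 : i' + ℓ + 1 ≤ i) (h2 : i ≤ i' + u + 1)
    (h3 : j' + ℓ + 1 ≤ j) (h4 : j ≤ j' + u + 1) :
    Mmat (fun _ => (ℓ, u)) v w (q + 1) i j := by
  obtain ⟨s, hs, hv, hw⟩ := h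
  refine ⟨s ++ [v[i]], by simp [hs], ?_, ?_⟩
  · exact matchAt_extend _ (List.getElem?_eq_getElem hi) hv (by omega) h1 h2
  · refine matchAt_extend _ ?_ hw (by omega) h3 h4
    rw [hvw]; exact List.getElem?_eq_getElem hj

lemma matchAt_restrict {α : Type*} {ℓ u : ℕ} {s x : List α} {i : ℕ}
    (h : MatchAt (fun _ => (ℓ, u)) s x i) (hs : 2 ≤ s.length) :
    ∃ i', i' + ℓ + 1 ≤ i ∧ i ≤ i' + u + 1 ∧
      MatchAt (fun _ => (ℓ, u)) (s.take (s.length - 1)) x i' := by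
  obtain ⟨e, ⟨hmono, hlet⟩, hgap, hlast⟩ := h
  set n := s.length with hn
  have hgg := hgap (n - 2) (by omega)
  have hmo := hmono (Set.mem_Iio.2 (show n - 2 < n by omega))
    (Set.mem_Iio.2 (show n - 1 < n by omega)) (by omega)
  rw [show n - 2 + 1 = n - 1 by omega, hlast] at hgg
  rw [hlast] at hmo
  simp only [inCon] at hgg
  obtain ⟨ha, hb⟩ := hgg
  refine ⟨e (n - 2), by omega, by omega, e, ⟨?_, ?_⟩, ?_, ?_⟩
  · intro p hp q hq hpq
    simp only [Set.mem_Iio, List.length_take] at hp hq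
    exact hmono (Set.mem_Iio.2 (by omega)) (Set.mem_Iio.2 (by omega)) hpq
  · intro k hk
    simp only [List.length_take] at hk
    rw [List.getElem?_take]
    simp only [show k < n - 1 by omega, if_true]
    exact hlet k (by omega)
  · intro k hk
    simp only [List.length_take] at hk
    exact hgap k (by omega)
  · simp only [List.length_take]
    congr 1
    omega

lemma mmat_restrict {α : Type*} {ℓ u : ℕ} {v w : List α} {p i j : ℕ}
    (h : Mmat (fun _ => (ℓ, u)) v w p i j) (hp : 2 ≤ p) :
    ∃ i' j', i' + ℓ + 1 ≤ i ∧ i ≤ i' + u + 1 ∧ j' + ℓ + 1 ≤ j ∧ j ≤ j' + u + 1 ∧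
      Mmat (fun _ => (ℓ, u)) v w (p - 1) i' j' := by
  obtain ⟨s, hs, hv, hw⟩ := h
  obtain ⟨i', hi1, hi2, hv'⟩ := matchAt_restrict hv (by omega)
  obtain ⟨j', hj1, hj2, hw'⟩ := matchAt_restrict hw (by omega)
  exact ⟨i', j', hi1, hi2, hj1, hj2, s.take (s.length - 1),
    by rw [List.length_take]; omega, hv', hw'⟩

theorem stmt7 {α : Type*} (v w : List α) (ℓ u : ℕ) (hlu : ℓ ≤ u) (M : ℕ → ℕ → ℕ)
    (hM : ∀ i j : ℕ,
      IsGreatest {p | p = 0 ∨ Mmat (fun _ => (ℓ, u)) v w p i j} (M i j)) :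
    ∀ (i j p : ℕ) (hi : i < v.length) (hj : j < w.length), 0 < p →
      (M i j = p ↔ v[i]'hi = w[j]'hj ∧
        IsGreatest {q | q = 0 ∨ ∃ i' j' : ℕ,
          i' + ℓ + 1 ≤ i ∧ i ≤ i' + u + 1 ∧ j' + ℓ + 1 ≤ j ∧ j ≤ j' + u + 1 ∧
          M i' j' = q} (p - 1)) := by
  intro i j p hi hj hp
  -- basic facts about M
  have hMmat : ∀ a b : ℕ, 0 < M a b → Mmat (fun _ => (ℓ, u)) v w (M a b) a b := by
    intro a b hab
    rcases (hM a b).1 with h | h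
    · omega
    · exact h
  have hMle : ∀ a b q : ℕ, Mmat (fun _ => (ℓ, u)) v w q a b → q ≤ M a b := by
    intro a b q hq
    exact (hM a b).2 (Or.inr hq)
  constructor
  · intro hMij
    have hmm : Mmat (fun _ => (ℓ, u)) v w p i j := by
      rw [← hMij]; exact hMmat i j (by omega)
    have hvw := mmat_head_eq hmm hp hi hj
    refine ⟨hvw, ?_, ?_⟩
    · -- p - 1 is in the set
      by_cases hp1 : p = 1
      · exact Or.inl (by omega)
      · obtain ⟨i', j', h1, h2, h3, h4, hmm'⟩ := mmat_restrict hmm (by omega)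
        refine Or.inr ⟨i', j', h1, h2, h3, h4, ?_⟩
        have hge : p - 1 ≤ M i' j' := hMle i' j' (p - 1) hmm'
        have hle : M i' j' ≤ p - 1 := by
          by_contra hcon
          have h0 : 0 < M i' j' := by omega
          have := hMle i j (M i' j' + 1)
            (mmat_extend hi hj hvw (hMmat i' j' h0) h0 h1 h2 h3 h4)
          omega
        omega
    · -- upper bound
      rintro q (hq | ⟨i', j', h1, h2, h3, h4, hq⟩)
      · omega
      · by_cases hq0 : q = 0
        · omega
        · have h0 : 0 < M i' j' := by omega
          have := hMle i j (q + 1) (by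
            rw [← hq]
            exact mmat_extend hi hj hvw (hMmat i' j' h0) h0 h1 h2 h3 h4)
          omega
  · rintro ⟨hvw, hmem, hub⟩
    have hpl : p ≤ M i j := by
      by_cases hp1 : p = 1
      · have := hMle i j 1 (mmat_one hi hj hvw _)
        omega
      · rcases hmem with h | ⟨i', j', h1, h2, h3, h4, hq⟩
        · omega
        · have h0 : 0 < M i' j' := by omega
          have := hMle i j (M i' j' + 1)
            (mmat_extend hi hj hvw (hMmat i' j' h0) h0 h1 h2 h3 h4)
          omega
    have hpu : M i j ≤ p := by
      by_cases hm1 : M i j ≤ 1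
      · omega
      · obtain ⟨i', j', h1, h2, h3, h4, hmm'⟩ :=
          mmat_restrict (hMmat i j (by omega)) (by omega)
        have hge : M i j - 1 ≤ M i' j' := hMle i' j' (M i j - 1) hmm'
        have hsl : M i' j' ≤ p - 1 :=
          hub (Or.inr ⟨i', j', h1, h2, h3, h4, rfl⟩)
        omega
    omega
end

section
/- Let v, w be words, B ≤ min(|v|,|w|), and define blocks v_i = v[iB+1 : min((i+2)B,|v|)] and w_j = w[jB+1 : min((j+2)B,|w|)]. Then the length of the longest common B-subsequence of v and w equals the maximum over all pairs (i,j) of the length of the longest common B-subsequence of v_i and w_j. -/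
def BSubseq {α : Type*} (B : ℕ) (s w : List α) : Prop :=
  ∃ i : ℕ, s.Sublist ((w.drop i).take B)

/-- `s` is a common `B`-subsequence of `v` and `w`. -/
def CommonB {α : Type*} (B : ℕ) (s v w : List α) : Prop :=
  BSubseq B s v ∧ BSubseq B s w

/-!
A factor of length `B` starting at position `m` lies inside the block of length `2B` starting at
`⌊m / B⌋ B`, since `m mod B < B`; conversely a factor of a block is a factor of the whole word.
So the nonempty common `B`-subsequences of `v` and `w` are exactly those of the block pairs, and
the empty one only contributes the length `0`, which never changes a supremum in `ℕ`.
-/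

theorem csSup_eq_csSup_of_forall_ne_bot {β : Type*} [ConditionallyCompleteLinearOrderBot β]
    {S T : Set β} (h : ∀ x ≠ ⊥, x ∈ S ↔ x ∈ T) : sSup S = sSup T := by
  have hsup (U : Set β) : sSup (insert ⊥ U) = sSup U := by
    by_cases hU : BddAbove U
    · rw [csSup_insert' hU, bot_sup_eq]
    · rw [csSup_of_not_bddAbove hU, csSup_of_not_bddAbove (by rwa [bddAbove_insert])]
  rw [← hsup S, ← hsup T]
  congr 1
  ext x
  rcases eq_or_ne x ⊥ with rfl | hx
  · simp
  · simp only [Set.mem_insert_iff, hx, h x hx, false_or]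

namespace BSubseq

variable {α : Type*} {B : ℕ} {s v : List α}

theorem of_take_drop {m n : ℕ} (h : BSubseq B s ((v.drop m).take n)) : BSubseq B s v := by
  obtain ⟨a, ha⟩ := h
  refine ⟨m + a, ?_⟩
  rw [List.drop_take, List.drop_drop, List.take_take] at ha
  exact ha.trans (List.take_sublist_take_left (Nat.min_le_left _ _))

theorem exists_block (hs : s ≠ []) (h : BSubseq B s v) :
    ∃ i, i * B < v.length ∧ BSubseq B s ((v.drop (i * B)).take (2 * B)) := by
  obtain ⟨m, hm⟩ := h
  have hmv : m < v.length := by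
    by_contra! hvm
    rw [List.drop_eq_nil_of_le hvm, List.take_nil, List.sublist_nil] at hm
    exact hs hm
  have hB : 0 < B := by
    have := hm.length_le.trans (List.length_take_le _ _)
    have := List.length_pos_iff.mpr hs
    omega
  refine ⟨m / B, (Nat.div_mul_le_self m B).trans_lt hmv, m % B, ?_⟩
  have hmod := Nat.mod_lt m hB
  rw [List.drop_take, List.drop_drop, List.take_take, Nat.div_add_mod',
    Nat.min_eq_left (by omega)]
  exact hm

end BSubseq

theorem stmt12_general {α : Type*} (v w : List α) (B : ℕ) :
    sSup {k | ∃ s : List α, s.length = k ∧ CommonB B s v w} =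
      sSup {k | ∃ (i j : ℕ) (s : List α), i * B < v.length ∧ j * B < w.length ∧
        s.length = k ∧
        CommonB B s ((v.drop (i * B)).take (2 * B)) ((w.drop (j * B)).take (2 * B))} := by
  refine csSup_eq_csSup_of_forall_ne_bot fun k hk => ⟨?_, ?_⟩
  · rintro ⟨s, rfl, hsv, hsw⟩
    have hs : s ≠ [] := by rintro rfl; exact hk rfl
    obtain ⟨i, hi, hbv⟩ := hsv.exists_block hs
    obtain ⟨j, hj, hbw⟩ := hsw.exists_block hs
    exact ⟨i, j, s, hi, hj, rfl, hbv, hbw⟩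
  · rintro ⟨i, j, s, -, -, hsk, hsv, hsw⟩
    exact ⟨s, hsk, hsv.of_take_drop, hsw.of_take_drop⟩

theorem stmt12 {α : Type*} (v w : List α) (B : ℕ)
    (hB1 : 1 ≤ B) (hBv : B ≤ v.length) (hBw : B ≤ w.length) :
    sSup {k | ∃ s : List α, s.length = k ∧ CommonB B s v w} =
      sSup {k | ∃ (i j : ℕ) (s : List α), i * B < v.length ∧ j * B < w.length ∧
        s.length = k ∧
        CommonB B s ((v.drop (i * B)).take (2 * B)) ((w.drop (j * B)).take (2 * B))} :=
  stmt12_general v w B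
end

section
/- Let v, w be words of length n each (n a multiple of B), with blocks v_i = v[iB+1 : (i+2)B] and w_j = w[jB+1 : (j+2)B]. Let s be a longest common B-subsequence of v and w and let LCS(x,y) denote the length of the longest (ordinary) common subsequence of x and y. Then max_{i,j} LCS(v_i, w_j) / 3 ≤ |s| ≤ max_{i,j} LCS(v_i, w_j). -/
/-- The length of the longest (ordinary) common subsequence of `x` and `y`. -/
noncomputable def LCSlen {α : Type*} (x y : List α) : ℕ :=
  sSup {k | ∃ t : List α, t.length = k ∧ t.Sublist x ∧ t.Sublist y}

lemma split3 {α : Type*} {t t1 t2 u1 u2 : List α} (h1 : t = t1 ++ t2) (h2 : t = u1 ++ u2)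
    (hle : t1.length ≤ u1.length) :
    ∃ p1 p2 p3 : List α, t = p1 ++ p2 ++ p3 ∧ p1.Sublist t1 ∧ p1.Sublist u1 ∧
      p2.Sublist t2 ∧ p2.Sublist u1 ∧ p3.Sublist t2 ∧ p3.Sublist u2 := by
  set a := t1.length with ha
  set b := u1.length with hb
  refine ⟨t.take a, (t.drop a).take (b - a), t.drop b, ?_, ?_, ?_, ?_, ?_, ?_, ?_⟩
  · have hd : t.drop b = (t.drop a).drop (b - a) := by
      rw [List.drop_drop, Nat.add_sub_cancel' hle]
    rw [List.append_assoc, hd, List.take_append_drop, List.take_append_drop]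
  · rw [h1, List.take_left]
  · have : t.take a = u1.take a := by rw [h2, List.take_append_of_le_length hle]
    rw [this]; exact List.take_sublist _ _
  · have : t.drop a = t2 := by rw [h1, List.drop_left]
    rw [this]; exact List.take_sublist _ _
  · have : (t.drop a).take (b - a) = (t.take b).drop a := by rw [List.drop_take]
    rw [this, h2, List.take_left]
    exact List.drop_sublist _ _
  · have : t.drop b = (t.drop a).drop (b - a) := by
      rw [List.drop_drop, Nat.add_sub_cancel' hle]
    rw [this]
    have : t.drop a = t2 := by rw [h1, List.drop_left]
    rw [this]; exact List.drop_sublist _ _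
  · rw [h2, List.drop_left]

lemma three_pieces {α : Type*} {t t1 t2 u1 u2 : List α} (h1 : t = t1 ++ t2) (h2 : t = u1 ++ u2) :
    ∃ p1 p2 p3 : List α, t = p1 ++ p2 ++ p3 ∧
      (p1.Sublist t1 ∨ p1.Sublist t2) ∧ (p1.Sublist u1 ∨ p1.Sublist u2) ∧
      (p2.Sublist t1 ∨ p2.Sublist t2) ∧ (p2.Sublist u1 ∨ p2.Sublist u2) ∧
      (p3.Sublist t1 ∨ p3.Sublist t2) ∧ (p3.Sublist u1 ∨ p3.Sublist u2) := by
  rcases le_total t1.length u1.length with hle | hle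
  · obtain ⟨p1, p2, p3, h, s1, s2, s3, s4, s5, s6⟩ := split3 h1 h2 hle
    exact ⟨p1, p2, p3, h, Or.inl s1, Or.inl s2, Or.inr s3, Or.inl s4, Or.inr s5, Or.inr s6⟩
  · obtain ⟨p1, p2, p3, h, s1, s2, s3, s4, s5, s6⟩ := split3 h2 h1 hle
    exact ⟨p1, p2, p3, h, Or.inl s2, Or.inl s1, Or.inl s4, Or.inr s3, Or.inr s6, Or.inr s5⟩

lemma window_split {α : Type*} (x : List α) (i B : ℕ) :
    (x.drop i).take (2 * B) = (x.drop i).take B ++ (x.drop (i + B)).take B := by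
  rw [two_mul, List.take_add, List.drop_drop]

/-- Core: a common subsequence of two blocks has length at most 3|s|. -/
lemma core {α : Type*} {B : ℕ} {v w s : List α}
    (hmax : ∀ u : List α, CommonB B u v w → u.length ≤ s.length)
    {t : List α} {i j : ℕ} (htv : t.Sublist ((v.drop i).take (2 * B)))
    (htw : t.Sublist ((w.drop j).take (2 * B))) :
    t.length ≤ 3 * s.length := by
  rw [window_split] at htv htw
  obtain ⟨t1, t2, h1, ht1, ht2⟩ := List.sublist_append_iff.mp htv
  obtain ⟨u1, u2, h2, hu1, hu2⟩ := List.sublist_append_iff.mp htw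
  obtain ⟨p1, p2, p3, hsplit, c1, c2, c3, c4, c5, c6⟩ := three_pieces h1 h2
  have key : ∀ p : List α, (p.Sublist t1 ∨ p.Sublist t2) → (p.Sublist u1 ∨ p.Sublist u2) →
      p.length ≤ s.length := by
    intro p hv' hw'
    apply hmax
    constructor
    · rcases hv' with h | h
      · exact ⟨i, h.trans ht1⟩
      · exact ⟨i + B, h.trans ht2⟩
    · rcases hw' with h | h
      · exact ⟨j, h.trans hu1⟩
      · exact ⟨j + B, h.trans hu2⟩
  have := key p1 c1 c2
  have := key p2 c3 c4
  have := key p3 c5 c6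
  have hlt : t.length = p1.length + p2.length + p3.length := by
    rw [hsplit]; simp; omega
  omega

lemma LCSlen_bddAbove {α : Type*} (x y : List α) :
    BddAbove {k | ∃ t : List α, t.length = k ∧ t.Sublist x ∧ t.Sublist y} := by
  refine ⟨x.length, fun k hk => ?_⟩
  obtain ⟨t, ht, hx, _⟩ := hk
  rw [← ht]; exact hx.length_le

lemma le_LCSlen {α : Type*} {x y t : List α} (hx : t.Sublist x) (hy : t.Sublist y) :
    t.length ≤ LCSlen x y :=
  le_csSup (LCSlen_bddAbove x y) ⟨t, rfl, hx, hy⟩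

theorem stmt13 {α : Type*} (v w : List α) (B n : ℕ) (hB1 : 1 ≤ B)
    (hv : v.length = n) (hw : w.length = n) (hdvd : B ∣ n)
    (s : List α) (hs : CommonB B s v w)
    (hmax : ∀ t : List α, CommonB B t v w → t.length ≤ s.length) :
    sSup {k | ∃ i j : ℕ, i * B < n ∧ j * B < n ∧
        k = LCSlen ((v.drop (i * B)).take (2 * B)) ((w.drop (j * B)).take (2 * B))}
      ≤ 3 * s.length ∧
    s.length ≤ sSup {k | ∃ i j : ℕ, i * B < n ∧ j * B < n ∧
        k = LCSlen ((v.drop (i * B)).take (2 * B)) ((w.drop (j * B)).take (2 * B))} := by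
  set S := {k | ∃ i j : ℕ, i * B < n ∧ j * B < n ∧
      k = LCSlen ((v.drop (i * B)).take (2 * B)) ((w.drop (j * B)).take (2 * B))} with hS
  have hSbdd : BddAbove S := by
    refine ⟨2 * B, fun k hk => ?_⟩
    obtain ⟨i, j, _, _, rfl⟩ := hk
    apply csSup_le'
    rintro m ⟨t, rfl, hx, -⟩
    calc t.length ≤ ((v.drop (i * B)).take (2 * B)).length := hx.length_le
      _ ≤ 2 * B := by simp
  constructor
  · apply csSup_le'
    rintro k ⟨i, j, _, _, rfl⟩
    apply csSup_le'
    rintro m ⟨t, rfl, hx, hy⟩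
    exact core hmax hx hy
  · -- s.length ≤ sSup S
    obtain ⟨⟨p, hpv⟩, ⟨q, hqw⟩⟩ := hs
    rcases eq_or_ne s [] with rfl | hne
    · exact Nat.zero_le _
    · -- the windows are nonempty, so p < n and q < n
      have hpn : p < n := by
        by_contra h
        push_neg at h
        rw [List.drop_eq_nil_of_le (by omega), List.take_nil, List.sublist_nil] at hpv
        exact hne hpv
      have hqn : q < n := by
        by_contra h
        push_neg at h
        rw [List.drop_eq_nil_of_le (by omega), List.take_nil, List.sublist_nil] at hqw
        exact hne hqw
      set i := p / B with hi
      set j := q / B with hj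
      have hiB : i * B ≤ p := Nat.div_mul_le_self p B
      have hjB : j * B ≤ q := Nat.div_mul_le_self q B
      have hpi : p - i * B < B := by
        have := Nat.mod_lt p (show 0 < B by omega)
        have : p % B = p - i * B := by
          rw [hi, Nat.mod_def, Nat.mul_comm]
        omega
      have hqj : q - j * B < B := by
        have := Nat.mod_lt q (show 0 < B by omega)
        have : q % B = q - j * B := by
          rw [hj, Nat.mod_def, Nat.mul_comm]
        omega
      have hwin : ∀ (x : List α) (r c : ℕ), c ≤ r → r - c < B →
          ((x.drop r).take B).Sublist ((x.drop c).take (2 * B)) := by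
        intro x r c hc hd
        have heq : (x.drop r).take B =
            (((x.drop c).take (2 * B)).drop (r - c)).take B := by
          rw [List.drop_take, List.drop_drop, Nat.add_sub_cancel' hc,
            List.take_take, Nat.min_eq_left (by omega)]
        rw [heq]
        exact ((List.take_sublist _ _).trans (List.drop_sublist _ _)).trans
          (List.Sublist.refl _)
      have hsv : s.Sublist ((v.drop (i * B)).take (2 * B)) :=
        hpv.trans (hwin v p (i * B) hiB hpi)
      have hsw : s.Sublist ((w.drop (j * B)).take (2 * B)) :=
        hqw.trans (hwin w q (j * B) hjB hqj)
      have h1 : s.length ≤ LCSlen ((v.drop (i * B)).take (2 * B))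
          ((w.drop (j * B)).take (2 * B)) := le_LCSlen hsv hsw
      have h2 : LCSlen ((v.drop (i * B)).take (2 * B))
          ((w.drop (j * B)).take (2 * B)) ∈ S :=
        ⟨i, j, by omega, by omega, rfl⟩
      exact h1.trans (le_csSup hSbdd h2)
end

section
/- If s is an ordinary common subsequence of two words of length 2B each, then s can be written as a concatenation of at most 3 strings, each of which is a common B-subsequence of the two words; in particular, |s| ≤ 3 · L where L is the length of the longest common B-subsequence of the two words. -/
lemma bsub_left {α : Type*} {B : ℕ} {t x : List α} (h : t.Sublist (x.take B)) :
    BSubseq B t x := ⟨0, by simpa using h⟩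

lemma bsub_right {α : Type*} {B : ℕ} {t x : List α} (hx : x.length = 2 * B)
    (h : t.Sublist (x.drop B)) : BSubseq B t x := by
  refine ⟨B, ?_⟩
  rwa [List.take_of_length_le (by simp [hx]; omega)]

lemma split3_s15 {α : Type*} {x y a b c d : List α} {B : ℕ}
    (heq : a ++ b = c ++ d)
    (ha : a.Sublist (x.take B)) (hb : b.Sublist (x.drop B))
    (hc : c.Sublist (y.take B)) (hd : d.Sublist (y.drop B))
    (hpq : a.length ≤ c.length) :
    ∃ s₁ s₂ s₃ : List α, a ++ b = s₁ ++ s₂ ++ s₃ ∧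
      s₁.Sublist (x.take B) ∧ s₁.Sublist (y.take B) ∧
      s₂.Sublist (x.drop B) ∧ s₂.Sublist (y.take B) ∧
      s₃.Sublist (x.drop B) ∧ s₃.Sublist (y.drop B) := by
  set p := a.length with hp
  have hta : a = c.take p := by
    have := congrArg (List.take p) heq
    rwa [List.take_left, List.take_append_of_le_length hpq] at this
  have htb : b = c.drop p ++ d := by
    have := congrArg (List.drop p) heq
    rwa [List.drop_left, List.drop_append_of_le_length hpq] at this
  refine ⟨a, c.drop p, d, ?_, ha, ?_, ?_, ?_, ?_, hd⟩
  · rw [htb, ← List.append_assoc]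
  · exact (hta ▸ List.take_sublist p c).trans hc
  · exact (htb ▸ (List.sublist_append_left _ _)).trans hb
  · exact (List.drop_sublist p c).trans hc
  · exact (htb ▸ (List.sublist_append_right _ _)).trans hb

lemma key {α : Type*} (x y s : List α) (B : ℕ)
    (hx : x.length = 2 * B) (hy : y.length = 2 * B)
    (hsx : s.Sublist x) (hsy : s.Sublist y) :
    ∃ s₁ s₂ s₃ : List α, s = s₁ ++ s₂ ++ s₃ ∧
      CommonB B s₁ x y ∧ CommonB B s₂ x y ∧ CommonB B s₃ x y := by
  have hx' : s.Sublist (x.take B ++ x.drop B) := by rwa [List.take_append_drop]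
  have hy' : s.Sublist (y.take B ++ y.drop B) := by rwa [List.take_append_drop]
  obtain ⟨a, b, hab, ha, hb⟩ := List.sublist_append_iff.mp hx'
  obtain ⟨c, d, hcd, hc, hd⟩ := List.sublist_append_iff.mp hy'
  rcases le_total a.length c.length with hle | hle
  · obtain ⟨s₁, s₂, s₃, he, h1x, h1y, h2x, h2y, h3x, h3y⟩ :=
      split3_s15 (hab ▸ hcd ▸ rfl : a ++ b = c ++ d) ha hb hc hd hle
    exact ⟨s₁, s₂, s₃, hab.trans he,
      ⟨bsub_left h1x, bsub_left h1y⟩,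
      ⟨bsub_right hx h2x, bsub_left h2y⟩,
      ⟨bsub_right hx h3x, bsub_right hy h3y⟩⟩
  · obtain ⟨s₁, s₂, s₃, he, h1y, h1x, h2y, h2x, h3y, h3x⟩ :=
      split3_s15 (hcd ▸ hab ▸ rfl : c ++ d = a ++ b) hc hd ha hb hle
    exact ⟨s₁, s₂, s₃, hcd.trans he,
      ⟨bsub_left h1x, bsub_left h1y⟩,
      ⟨bsub_left h2x, bsub_right hy h2y⟩,
      ⟨bsub_right hx h3x, bsub_right hy h3y⟩⟩

theorem stmt15 {α : Type*} (x y s : List α) (B L : ℕ)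
    (hx : x.length = 2 * B) (hy : y.length = 2 * B)
    (hsx : s.Sublist x) (hsy : s.Sublist y)
    (hL : IsGreatest {k | ∃ t : List α, t.length = k ∧ CommonB B t x y} L) :
    (∃ s₁ s₂ s₃ : List α, s = s₁ ++ s₂ ++ s₃ ∧
      CommonB B s₁ x y ∧ CommonB B s₂ x y ∧ CommonB B s₃ x y) ∧
    s.length ≤ 3 * L := by
  obtain ⟨s₁, s₂, s₃, he, h1, h2, h3⟩ := key x y s B hx hy hsx hsy
  refine ⟨⟨s₁, s₂, s₃, he, h1, h2, h3⟩, ?_⟩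
  have b1 : s₁.length ≤ L := hL.2 ⟨s₁, rfl, h1⟩
  have b2 : s₂.length ≤ L := hL.2 ⟨s₂, rfl, h2⟩
  have b3 : s₃.length ≤ L := hL.2 ⟨s₃, rfl, h3⟩
  have : s.length = s₁.length + s₂.length + s₃.length := by simp [he]; omega
  omega
end
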